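/- Let S be a strongly ℤ^k-graded unital ring with grading 𝒜 : (Fin k → ℤ) → AddSubgroup S, and suppose S is semi-commutative: a * b = 0 implies a * s * b = 0 for all s ∈ S. Let f_1, ..., f_ℓ ∈ S and suppose there exists a non-zero g ∈ S with f_j * g = 0 for all j. Then there exists a non-zero element h ∈ 𝒜 0, homogeneous of degree 0, such that f_j * h = 0 for all j. -/

import Mathlib

/-!
Take a nonzero common right annihilator `g` of the `f j` with the fewest homogeneous components.
By semicommutativity `y * g` is again a common annihilator for every `y`, so minimality forces
`y * g = 0` as soon as a homogeneous `y` kills one component of `g`. Ordering `ℤ^k`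
lexicographically, the top component of `f j * g = 0` is the product of the top components;
peeling off top components shows that every component of `f j` kills `g`, hence every
component of `g` is a common annihilator. Strong grading finally moves a nonzero homogeneous
annihilator of degree `v` into degree `0`: `1 ∈ 𝒜 v * 𝒜 (-v)` cannot kill it.
-/

open DirectSum

section

variable {ι σ S : Type*} [DecidableEq ι] [Semiring S] [SetLike σ S] [AddSubmonoidClass σ S]
  (𝒜 : ι → σ)

theorem DirectSum.coe_decompose_mul_add_of_forall_le [AddCommMonoid ι] [LinearOrder ι]
    [IsOrderedCancelAddMonoid ι] [GradedRing 𝒜] {a b : S} {i j : ι}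
    (ha : ∀ x, decompose 𝒜 a x ≠ 0 → x ≤ i) (hb : ∀ y, decompose 𝒜 b y ≠ 0 → y ≤ j) :
    (decompose 𝒜 (a * b) (i + j) : S) = decompose 𝒜 a i * decompose 𝒜 b j := by
  classical
  rw [decompose_mul, coe_mul_apply, Finset.sum_eq_single (i, j)]
  · rintro ⟨x, y⟩ hxy hne
    simp only [Finset.mem_filter, Finset.mem_product, DFinsupp.mem_support_iff] at hxy
    obtain ⟨⟨hx, hy⟩, hsum⟩ := hxy
    exact absurd (Prod.ext_iff.2 ((add_eq_add_iff_eq_and_eq (ha x hx) (hb y hy)).1 hsum)) hne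
  · intro hij
    by_contra hne
    refine hij (Finset.mem_filter.2 ⟨Finset.mem_product.2 ⟨?_, ?_⟩, rfl⟩) <;>
      rw [DFinsupp.mem_support_iff] <;> rintro h <;> simp [h] at hne

theorem exists_mul_ne_zero_of_one_mem_closure {X Y : Set S}
    (h1 : (1 : S) ∈ AddSubmonoid.closure {p | ∃ x ∈ X, ∃ y ∈ Y, p = x * y}) {h : S}
    (hh : h ≠ 0) : ∃ y ∈ Y, y * h ≠ 0 := by
  by_contra! hY
  have hle : AddSubmonoid.closure {p | ∃ x ∈ X, ∃ y ∈ Y, p = x * y} ≤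
      AddMonoidHom.mker (AddMonoidHom.mulRight h) := by
    rw [AddSubmonoid.closure_le]
    rintro _ ⟨x, -, y, hy, rfl⟩
    simp [mul_assoc, hY y hy]
  exact hh (by simpa using hle h1)

theorem DirectSum.coe_decompose_sum_apply [AddMonoid ι] [GradedRing 𝒜] {T : Finset ι}
    {p : ι → S} (hp : ∀ x ∈ T, p x ∈ 𝒜 x) (i : ι) :
    (decompose 𝒜 (∑ x ∈ T, p x) i : S) = if i ∈ T then p i else 0 := by
  rw [decompose_sum, DFinsupp.finsetSum_apply, AddSubmonoidClass.coe_finsetSum]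
  split_ifs with hi
  · rw [Finset.sum_eq_single_of_mem i hi fun x hx hne => decompose_of_mem_ne 𝒜 (hp x hx) hne,
      decompose_of_mem_same 𝒜 (hp i hi)]
  · exact Finset.sum_eq_zero fun x hx =>
      decompose_of_mem_ne 𝒜 (hp x hx) (ne_of_mem_of_not_mem hx hi)

theorem DirectSum.mul_coe_decompose_eq_zero [AddLeftCancelMonoid ι] [GradedRing 𝒜] {a b : S}
    (h : ∀ i, decompose 𝒜 a i * b = 0) (j : ι) : a * decompose 𝒜 b j = 0 := by
  classical
  rw [← sum_support_decompose 𝒜 a, Finset.sum_mul]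
  refine Finset.sum_eq_zero fun i _ => ?_
  rw [← coe_decompose_mul_add_of_left_mem 𝒜 (SetLike.coe_mem (decompose 𝒜 a i)), h i,
    decompose_zero, DirectSum.zero_apply, ZeroMemClass.coe_zero]

section MinimalAnnihilator

variable [AddCommGroup ι] [GradedRing 𝒜] [∀ i (x : 𝒜 i), Decidable (x ≠ 0)]
  {κ : Type*} {f : κ → S} {g : S}
  (hsc : ∀ a b : S, a * b = 0 → ∀ s, a * s * b = 0) (hfg : ∀ j, f j * g = 0)
  (hmin : ∀ g', g' ≠ 0 → (∀ j, f j * g' = 0) →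
    (decompose 𝒜 g).support.card ≤ (decompose 𝒜 g').support.card)
include hsc hfg hmin

/-- `y * g` is a common annihilator whose support misses the degree `u + v`, so it has fewer
components than `g`. -/
theorem mul_eq_zero_of_mul_decompose_eq_zero {u v : ι} {y : S}
    (hy : y ∈ 𝒜 u) (hv : decompose 𝒜 g v ≠ 0) (hyv : y * decompose 𝒜 g v = 0) : y * g = 0 := by
  by_contra hne
  have hcomp (d : ι) : (decompose 𝒜 (y * g) (u + d) : S) = y * decompose 𝒜 g d :=
    coe_decompose_mul_add_of_left_mem 𝒜 hy
  have hlt : (decompose 𝒜 (y * g)).support.card < (decompose 𝒜 g).support.card := by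
    calc (decompose 𝒜 (y * g)).support.card ≤ ((decompose 𝒜 g).support.erase v).card := by
          refine Finset.card_le_card_of_injOn (-u + ·) (fun d hd => ?_)
            (fun d _ d' _ h => add_left_cancel h)
          rw [Finset.mem_coe, DFinsupp.mem_support_iff, ← add_neg_cancel_left u d, ne_eq,
            ← ZeroMemClass.coe_eq_zero, hcomp] at hd
          rw [Finset.mem_coe, Finset.mem_erase, DFinsupp.mem_support_iff]
          refine ⟨fun h => hd ?_, fun h => hd ?_⟩
          · rw [show -u + d = v from h, hyv]
          · rw [h, ZeroMemClass.coe_zero, mul_zero]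
      _ < (decompose 𝒜 g).support.card :=
          Finset.card_erase_lt_of_mem (DFinsupp.mem_support_iff.2 hv)
  exact (hmin _ hne fun j => by rw [← mul_assoc]; exact hsc _ _ (hfg j) y).not_gt hlt

theorem coe_decompose_mul_eq_zero_of_mul_eq_zero [LinearOrder ι] [IsOrderedAddMonoid ι]
    {vm : ι} (hvm : decompose 𝒜 g vm ≠ 0) (hmax : ∀ v, decompose 𝒜 g v ≠ 0 → v ≤ vm)
    {a : S} (ha : a * g = 0) (i : ι) : decompose 𝒜 a i * g = 0 := by
  suffices key : ∀ (T : Finset ι) (p : ι → S), (∀ x ∈ T, p x ∈ 𝒜 x) →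
      (∑ x ∈ T, p x) * g = 0 → ∀ x ∈ T, p x * g = 0 by
    by_cases hi : decompose 𝒜 a i = 0
    · rw [hi, ZeroMemClass.coe_zero, zero_mul]
    refine key _ (fun x => decompose 𝒜 a x) (fun x _ => SetLike.coe_mem _) ?_ i
      (DFinsupp.mem_support_iff.2 hi)
    rwa [sum_support_decompose]
  intro T
  induction T using Finset.induction_on_max with
  | empty => simp
  | insert xm T hlt ih =>
    intro p hp hpg
    have hxm : xm ∉ T := fun h => (hlt xm h).false
    have hsum := coe_decompose_sum_apply 𝒜 hp
    have htop : p xm * g = 0 := by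
      refine mul_eq_zero_of_mul_decompose_eq_zero 𝒜 hsc hfg hmin (hp xm (T.mem_insert_self xm))
        hvm ?_
      have hle : ∀ x, decompose 𝒜 (∑ x ∈ insert xm T, p x) x ≠ 0 → x ≤ xm := by
        intro x hx
        rw [ne_eq, ← ZeroMemClass.coe_eq_zero, hsum] at hx
        split_ifs at hx with hmem
        · exact (Finset.mem_insert.1 hmem).elim le_of_eq fun h => (hlt x h).le
        · exact absurd rfl hx
      have := coe_decompose_mul_add_of_forall_le 𝒜 hle hmax
      rwa [hpg, hsum, if_pos (T.mem_insert_self xm), decompose_zero, DirectSum.zero_apply,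
        ZeroMemClass.coe_zero, eq_comm] at this
    have hrest : (∑ x ∈ T, p x) * g = 0 := by
      rwa [Finset.sum_insert hxm, add_mul, htop, zero_add] at hpg
    intro x hx
    rcases Finset.mem_insert.1 hx with rfl | hx
    · exact htop
    · exact ih p (fun x hx => hp x (Finset.mem_insert_of_mem hx)) hrest x hx

end MinimalAnnihilator

theorem exists_homogeneous_annihilator_of_semicommutative [AddCommGroup ι] [LinearOrder ι]
    [IsOrderedAddMonoid ι] [GradedRing 𝒜] (hsc : ∀ a b : S, a * b = 0 → ∀ s, a * s * b = 0)
    {κ : Type*} (f : κ → S) {g : S} (hg : g ≠ 0) (hfg : ∀ j, f j * g = 0) :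
    ∃ i, ∃ h ∈ 𝒜 i, h ≠ 0 ∧ ∀ j, f j * h = 0 := by
  classical
  obtain ⟨g₀, ⟨hg₀, hfg₀⟩, hmin⟩ := (measure fun s => (decompose 𝒜 s).support.card).wf.has_min
    {s | s ≠ 0 ∧ ∀ j, f j * s = 0} ⟨g, hg, hfg⟩
  have hsupp : (decompose 𝒜 g₀).support.Nonempty := by
    rw [Finset.nonempty_iff_ne_empty, Ne, DFinsupp.support_eq_empty]
    exact fun h => hg₀ ((decompose 𝒜).injective (h.trans (decompose_zero 𝒜).symm))
  obtain ⟨vm, hvm, hmax⟩ := (decompose 𝒜 g₀).support.exists_max_image id hsupp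
  rw [DFinsupp.mem_support_iff] at hvm
  refine ⟨vm, _, SetLike.coe_mem (decompose 𝒜 g₀ vm), by simpa using hvm, fun j => ?_⟩
  exact mul_coe_decompose_eq_zero 𝒜 (coe_decompose_mul_eq_zero_of_mul_eq_zero 𝒜 hsc hfg₀
    (fun g' hg' hfg' => not_lt.1 (hmin g' ⟨hg', hfg'⟩)) hvm
    (fun v hv => hmax v (DFinsupp.mem_support_iff.2 hv)) (hfg₀ j)) vm

end

theorem exists_degree_zero_annihilator_of_semicommutative_strongly_graded
    {k : ℕ} {S : Type*} [Ring S]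
    (𝒜 : (Fin k → ℤ) → AddSubgroup S) [GradedRing 𝒜]
    (hstrong : ∀ v w : Fin k → ℤ, ∀ z ∈ 𝒜 (v + w),
      z ∈ AddSubmonoid.closure {p : S | ∃ x ∈ 𝒜 v, ∃ y ∈ 𝒜 w, p = x * y})
    (hsc : ∀ a b : S, a * b = 0 → ∀ s : S, a * s * b = 0)
    {ℓ : ℕ} (f : Fin ℓ → S) (g : S) (hg : g ≠ 0)
    (hfg : ∀ j : Fin ℓ, f j * g = 0) :
    ∃ h ∈ 𝒜 (0 : Fin k → ℤ), h ≠ 0 ∧ ∀ j : Fin ℓ, f j * h = 0 := by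
  -- `Fin k → ℤ` has no linear order instance; view the grading as indexed by `Lex (Fin k → ℤ)`.
  let : GradedRing (ι := Lex (Fin k → ℤ)) 𝒜 := ‹GradedRing 𝒜›
  obtain ⟨v, h, hv, hne, hfh⟩ :=
    exists_homogeneous_annihilator_of_semicommutative (ι := Lex (Fin k → ℤ)) 𝒜 hsc f hg hfg
  obtain ⟨y, hy, hyh⟩ := exists_mul_ne_zero_of_one_mem_closure
    (hstrong (ofLex v) (-ofLex v) 1 (by simpa using SetLike.one_mem_graded 𝒜)) hne
  refine ⟨y * h, by simpa using SetLike.mul_mem_graded hy (show h ∈ 𝒜 (ofLex v) from hv), hyh,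
    fun j => ?_⟩
  rw [← mul_assoc]
  exact hsc _ _ (hfh j) y
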